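/- arXiv:1912.03505 — 4 statements merged into one kernel-verified Lean document; each statement's English description precedes it below -/
import Mathlib

section
/- Let (X,𝒪) be a T0 L-valued topological space with specialization L-order e, and let u, v ∈ Φ_L(X). Then (1) ⨅_{W ∈ 𝒪(Φ_L(X))} (W(u) ⇨ W(v)) = ⨅_{A∈𝒪} (u(A) ⇨ v(A)) = sub(u,v); and (2) if r : Φ_L(X) → X is continuous, then sub(u,v) ≤ e(r(u), r(v)). -/
variable {L : Type*} {X : Type*} {Y : Type*}

/-- `sub(A,B) = ⨅ x, A x ⇨ B x` for `L`-subsets `A B : X → L`. -/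
def subL [Order.Frame L] (A B : X → L) : L := ⨅ x, A x ⇨ B x

/-- An `L`-valued topology on `X`: a family of `L`-subsets closed under binary
pointwise infima, arbitrary pointwise suprema, containing all constants. -/
structure IsLTopology [Order.Frame L] (𝒪 : Set (X → L)) : Prop where
  inf_mem : ∀ A B : X → L, A ∈ 𝒪 → B ∈ 𝒪 → A ⊓ B ∈ 𝒪
  sSup_mem : ∀ S : Set (X → L), S ⊆ 𝒪 → sSup S ∈ 𝒪
  const_mem : ∀ a : L, (fun _ => a : X → L) ∈ 𝒪

/-- An open filter of `(X, 𝒪)`: a map `u : 𝒪 → L` with `u (A ⊓ B) = u A ⊓ u B`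
and `u (a_X) ≥ a`. -/
structure LFilter [Order.Frame L] (𝒪 : Set (X → L)) where
  toFun : ↥𝒪 → L
  map_inf : ∀ (A B : ↥𝒪) (h : (A : X → L) ⊓ (B : X → L) ∈ 𝒪),
    toFun ⟨(A : X → L) ⊓ (B : X → L), h⟩ = toFun A ⊓ toFun B
  const_le : ∀ (a : L) (h : (fun _ => a : X → L) ∈ 𝒪), a ≤ toFun ⟨fun _ => a, h⟩

/-- `φ(A)(u) = u(A)`. -/
def phiF [Order.Frame L] (𝒪 : Set (X → L)) (A : ↥𝒪) : LFilter 𝒪 → L := fun u => u.toFun A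

/-- The `L`-valued topology on `Φ_L(X)` generated by the base `{φ(A) | A ∈ 𝒪}`:
its members are exactly the suprema `⨆_j φ(A_j) ⊓ (a_j)_const`. -/
def filtOpens [Order.Frame L] (𝒪 : Set (X → L)) : Set (LFilter 𝒪 → L) :=
  { W | ∃ S : Set (↥𝒪 × L), W = fun u => ⨆ p ∈ S, u.toFun p.1 ⊓ p.2 }

/-- The pointed filter `[x](A) = A(x)`. -/
def ptFilter [Order.Frame L] (𝒪 : Set (X → L)) (x : X) : LFilter 𝒪 where
  toFun A := (A : X → L) x
  map_inf _ _ _ := rfl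
  const_le _ _ := le_rfl

/-- The filter `[S](A) = sub(S, A)` for an `L`-subset `S`. -/
def prFilter [Order.Frame L] (𝒪 : Set (X → L)) (S : X → L) : LFilter 𝒪 where
  toFun A := subL S (A : X → L)
  map_inf A B h := by
    simp only [subL, Pi.inf_apply, himp_inf_distrib]
    exact iInf_inf_eq
  const_le a h := le_iInf fun x => le_himp_iff.2 inf_le_left

/-- `Φ_L f` for a continuous map `f`. -/
def filtMap [Order.Frame L] (𝒪X : Set (X → L)) (𝒪Y : Set (Y → L)) (f : X → Y)
    (hf : ∀ B : ↥𝒪Y, (B : Y → L) ∘ f ∈ 𝒪X) (u : LFilter 𝒪X) : LFilter 𝒪Y where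
  toFun B := u.toFun ⟨(B : Y → L) ∘ f, hf B⟩
  map_inf A B h := u.map_inf ⟨(A : Y → L) ∘ f, hf A⟩ ⟨(B : Y → L) ∘ f, hf B⟩
    (hf ⟨(A : Y → L) ⊓ (B : Y → L), h⟩)
  const_le a h := u.const_le a (hf ⟨fun _ => a, h⟩)

lemma phi_mem [Order.Frame L] (𝒪 : Set (X → L)) (A : ↥𝒪) : phiF 𝒪 A ∈ filtOpens 𝒪 := by
  refine ⟨{(A, ⊤)}, ?_⟩
  funext u
  simp [phiF]

lemma LFilter.mono [Order.Frame L] {𝒪 : Set (X → L)} (u : LFilter 𝒪) (A B : ↥𝒪)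
    (hAB : (A : X → L) ≤ (B : X → L)) : u.toFun A ≤ u.toFun B := by
  have h : (A : X → L) ⊓ (B : X → L) ∈ 𝒪 := by
    rw [inf_eq_left.2 hAB]; exact A.2
  have h2 := u.map_inf A B h
  have h3 : (⟨(A : X → L) ⊓ (B : X → L), h⟩ : ↥𝒪) = A := Subtype.ext (inf_eq_left.2 hAB)
  rw [h3] at h2
  rw [h2]
  exact inf_le_right

lemma phi_inf [Order.Frame L] (𝒪 : Set (X → L)) (A B : ↥𝒪)
    (h : (A : X → L) ⊓ (B : X → L) ∈ 𝒪) :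
    phiF 𝒪 ⟨(A : X → L) ⊓ (B : X → L), h⟩ = phiF 𝒪 A ⊓ phiF 𝒪 B := by
  funext u
  exact u.map_inf A B h

lemma const_mem_filtOpens [Order.Frame L] (𝒪 : Set (X → L)) (a : L)
    (h : (fun _ => a : X → L) ∈ 𝒪) :
    (fun _ => a : LFilter 𝒪 → L) ∈ filtOpens 𝒪 := by
  refine ⟨{(⟨fun _ => a, h⟩, a)}, ?_⟩
  funext u
  simp only [Set.mem_singleton_iff, iSup_iSup_eq_left]
  exact (inf_eq_right.2 (u.const_le a h)).symm

/-- `μ_X(α)(A) = α(φ(A))`. -/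
def muF [Order.Frame L] (𝒪 : Set (X → L)) (α : LFilter (filtOpens 𝒪)) : LFilter 𝒪 where
  toFun A := α.toFun ⟨phiF 𝒪 A, phi_mem 𝒪 A⟩
  map_inf A B h := by
    have h' : phiF 𝒪 A ⊓ phiF 𝒪 B ∈ filtOpens 𝒪 := phi_inf 𝒪 A B h ▸ phi_mem 𝒪 ⟨_, h⟩
    have h2 := α.map_inf ⟨phiF 𝒪 A, phi_mem 𝒪 A⟩ ⟨phiF 𝒪 B, phi_mem 𝒪 B⟩ h'
    have h3 : (⟨phiF 𝒪 ⟨(A : X → L) ⊓ (B : X → L), h⟩, phi_mem 𝒪 ⟨_, h⟩⟩ :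
        ↥(filtOpens 𝒪)) = ⟨phiF 𝒪 A ⊓ phiF 𝒪 B, h'⟩ := Subtype.ext (phi_inf 𝒪 A B h)
    show α.toFun ⟨phiF 𝒪 ⟨(A : X → L) ⊓ (B : X → L), h⟩, phi_mem 𝒪 ⟨_, h⟩⟩ =
      α.toFun ⟨phiF 𝒪 A, phi_mem 𝒪 A⟩ ⊓ α.toFun ⟨phiF 𝒪 B, phi_mem 𝒪 B⟩
    rw [h3]
    exact h2
  const_le a h := by
    have h1 : (fun _ => a : LFilter 𝒪 → L) ∈ filtOpens 𝒪 := const_mem_filtOpens 𝒪 a h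
    have h2 : (fun _ => a : LFilter 𝒪 → L) ≤ phiF 𝒪 ⟨fun _ => a, h⟩ :=
      fun u => u.const_le a h
    exact le_trans (α.const_le a h1) (α.mono ⟨_, h1⟩ ⟨_, phi_mem 𝒪 ⟨_, h⟩⟩ h2)

lemma filtMap_continuous [Order.Frame L] (𝒪X : Set (X → L)) (𝒪Y : Set (Y → L)) (f : X → Y)
    (hf : ∀ B : ↥𝒪Y, (B : Y → L) ∘ f ∈ 𝒪X) :
    ∀ W ∈ filtOpens 𝒪Y, (W ∘ filtMap 𝒪X 𝒪Y f hf) ∈ filtOpens 𝒪X := by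
  rintro W ⟨S, rfl⟩
  refine ⟨(fun p : ↥𝒪Y × L => ((⟨(p.1 : Y → L) ∘ f, hf p.1⟩ : ↥𝒪X), p.2)) '' S, ?_⟩
  funext u
  rw [iSup_image]
  rfl

lemma muF_continuous [Order.Frame L] (𝒪 : Set (X → L)) :
    ∀ W ∈ filtOpens 𝒪, (W ∘ muF 𝒪) ∈ filtOpens (filtOpens 𝒪) := by
  rintro W ⟨S, rfl⟩
  refine ⟨(fun p : ↥𝒪 × L =>
    ((⟨phiF 𝒪 p.1, phi_mem 𝒪 p.1⟩ : ↥(filtOpens 𝒪)), p.2)) '' S, ?_⟩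
  funext α
  rw [iSup_image]
  rfl

lemma ptFilter_continuous [Order.Frame L] (𝒪 : Set (X → L)) (h𝒪 : IsLTopology 𝒪) :
    ∀ W ∈ filtOpens 𝒪, (W ∘ ptFilter 𝒪) ∈ 𝒪 := by
  rintro W ⟨S, rfl⟩
  have key : ((fun u : LFilter 𝒪 => ⨆ p ∈ S, u.toFun p.1 ⊓ p.2) ∘ ptFilter 𝒪) =
      sSup ((fun p : ↥𝒪 × L => (p.1 : X → L) ⊓ fun _ => p.2) '' S) := by
    funext x
    rw [sSup_image', iSup_apply]
    exact (iSup_subtype'' S fun p : ↥𝒪 × L =>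
      ((p.1 : X → L) ⊓ fun _ => p.2 : X → L) x).symm
  rw [key]
  apply h𝒪.sSup_mem
  rintro g ⟨p, _, rfl⟩
  exact h𝒪.inf_mem _ _ p.1.2 (h𝒪.const_mem p.2)

/-- An `L`-order as a binary `L`-relation with the order axioms. -/
structure IsLOrder [Order.Frame L] (e : X → X → L) : Prop where
  refl : ∀ x, e x x = ⊤
  trans : ∀ x y z, e x y ⊓ e y z ≤ e x z
  antisymm : ∀ x y, e x y = ⊤ → e y x = ⊤ → x = y

/-- `s` is a supremum of the `L`-subset `A`. -/
def IsSupE [Order.Frame L] (e : X → X → L) (A : X → L) (s : X) : Prop :=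
  ∀ y, e s y = ⨅ z, A z ⇨ e z y

/-- `i` is an infimum of the `L`-subset `A`. -/
def IsInfE [Order.Frame L] (e : X → X → L) (A : X → L) (i : X) : Prop :=
  ∀ y, e y i = ⨅ z, A z ⇨ e y z

/-- Completeness: every `L`-subset has a supremum. -/
def CompleteE [Order.Frame L] (e : X → X → L) : Prop := ∀ A : X → L, ∃ s, IsSupE e A s

/-- Directedness of an `L`-subset. -/
def DirectedE [Order.Frame L] (e : X → X → L) (D : X → L) : Prop :=
  (⨆ x, D x) = ⊤ ∧ ∀ x y, D x ⊓ D y ≤ ⨆ z, D z ⊓ e x z ⊓ e y z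

/-- An ideal: a directed lower set. -/
def IsIdealE [Order.Frame L] (e : X → X → L) (I : X → L) : Prop :=
  DirectedE e I ∧ ∀ x y, I x ⊓ e y x ≤ I y

/-- `↑x(y) = e(x,y)`. -/
def upE [Order.Frame L] (e : X → X → L) (x : X) : X → L := fun y => e x y

/-- `⇓x(y) = ⨅_{I ideal} (e(x, ⊔I) ⇨ I(y))`. -/
def wbelowE [Order.Frame L] (e : X → X → L) (x y : X) : L :=
  ⨅ I : X → L, ⨅ _ : IsIdealE e I, ⨅ s : X, ⨅ _ : IsSupE e I s, e x s ⇨ I y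

/-- Scott open `L`-subsets. -/
def ScottOpenE [Order.Frame L] (e : X → X → L) (A : X → L) : Prop :=
  (∀ x y, A x ⊓ e x y ≤ A y) ∧
  ∀ D : X → L, DirectedE e D → ∀ s, IsSupE e D s → A s ≤ ⨆ x, A x ⊓ D x

/-- The `L`-Scott topology. -/
def scottOpens [Order.Frame L] (e : X → X → L) : Set (X → L) := { A | ScottOpenE e A }

/-- `u^l(x) = ⨆_{A ∈ σ_L(X)} u(A) ⊓ sub(A, ↑x)`. -/
def lowerOf [Order.Frame L] (e : X → X → L) (u : LFilter (scottOpens e)) : X → L :=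
  fun x => ⨆ A : ↥(scottOpens e), u.toFun A ⊓ subL (A : X → L) (upE e x)

/-- The specialization `L`-order `e(x,y) = ⨅_{A ∈ 𝒪} (A x ⇨ A y)`. -/
def specE [Order.Frame L] (𝒪 : Set (X → L)) (x y : X) : L :=
  ⨅ A : ↥𝒪, (A : X → L) x ⇨ (A : X → L) y

/-- `sub(u,v) = ⨅_{A ∈ 𝒪} (u A ⇨ v A)` for open filters. -/
def subF [Order.Frame L] {𝒪 : Set (X → L)} (u v : LFilter 𝒪) : L :=
  ⨅ A : ↥𝒪, u.toFun A ⇨ v.toFun A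

/-! Every open `W` of `Φ_L(X)` is a join of basic opens `φ(A) ⊓ a`, and `sub(u,v) ⊓ u(A) ≤ v(A)`
for every `A ∈ 𝒪`; as `⊓` distributes over joins in a frame, `sub(u,v) ⊓ W(u) ≤ W(v)`.
This is the inequality `≥` in (1), the reverse one comes from the opens `W = φ(A)`, and (2) is
the case `W = A ∘ r`. -/

section

variable [Order.Frame L] {𝒪 : Set (X → L)}

lemma subF_le_himp_of_mem_filtOpens (u v : LFilter 𝒪) {W : LFilter 𝒪 → L}
    (hW : W ∈ filtOpens 𝒪) : subF u v ≤ W u ⇨ W v := by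
  obtain ⟨S, rfl⟩ := hW
  rw [le_himp_iff, inf_iSup₂_eq]
  refine iSup₂_mono fun p _ => ?_
  rw [← inf_assoc]
  exact inf_le_inf_right _ (le_himp_iff.1 (iInf_le _ p.1))

lemma iInf_filtOpens_himp_eq_subF (u v : LFilter 𝒪) :
    (⨅ W : ↥(filtOpens 𝒪), (W : LFilter 𝒪 → L) u ⇨ (W : LFilter 𝒪 → L) v) = subF u v :=
  le_antisymm (le_iInf fun A => iInf_le_of_le ⟨phiF 𝒪 A, phi_mem 𝒪 A⟩ le_rfl)
    (le_iInf fun W => subF_le_himp_of_mem_filtOpens u v W.2)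

lemma subF_le_specE_of_continuous (u v : LFilter 𝒪) {r : LFilter 𝒪 → X}
    (hr : ∀ A : ↥𝒪, (A : X → L) ∘ r ∈ filtOpens 𝒪) :
    subF u v ≤ specE 𝒪 (r u) (r v) :=
  le_iInf fun A => subF_le_himp_of_mem_filtOpens u v (hr A)

end

theorem stmt15_general [Order.Frame L] (𝒪 : Set (X → L)) (u v : LFilter 𝒪) :
    ((⨅ W : ↥(filtOpens 𝒪), (W : LFilter 𝒪 → L) u ⇨ (W : LFilter 𝒪 → L) v) =
      subF u v) ∧
    ∀ r : LFilter 𝒪 → X, (∀ A : ↥𝒪, ((A : X → L) ∘ r) ∈ filtOpens 𝒪) →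
      subF u v ≤ specE 𝒪 (r u) (r v) :=
  ⟨iInf_filtOpens_himp_eq_subF u v, fun _ hr => subF_le_specE_of_continuous u v hr⟩

/-- For a `T0` `L`-valued topological space with specialization
`L`-order `e` and `u, v ∈ Φ_L(X)`:
(1) `⨅_{W ∈ 𝒪(Φ_L(X))} (W(u) ⇨ W(v)) = ⨅_{A ∈ 𝒪} (u(A) ⇨ v(A)) = sub(u,v)`;
(2) if `r : Φ_L(X) → X` is continuous then `sub(u,v) ≤ e(r(u), r(v))`. -/
theorem stmt15 [Order.Frame L] (𝒪 : Set (X → L)) (h𝒪 : IsLTopology 𝒪)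
    (hT0 : ∀ x y : X, (∀ A ∈ 𝒪, A x = A y) → x = y) (u v : LFilter 𝒪) :
    ((⨅ W : ↥(filtOpens 𝒪), (W : LFilter 𝒪 → L) u ⇨ (W : LFilter 𝒪 → L) v) =
      subF u v) ∧
    ∀ r : LFilter 𝒪 → X, (∀ A : ↥𝒪, ((A : X → L) ∘ r) ∈ filtOpens 𝒪) →
      subF u v ≤ specE 𝒪 (r u) (r v) :=
  stmt15_general 𝒪 u v
end

section
/- Let (X,r) be a Φ_L-algebra over the category of T0 L-valued topological spaces, and let e be the specialization L-order of X. Then for every u ∈ Φ_L(X) and x ∈ X, lim_X u(x) = e(x, r(u)), where lim_X u(x) = ⨅_{A∈𝒪} (A(x) ⇨ u(A)). -/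
variable {L : Type*} {X : Type*} {Y : Type*}

/-!
Continuity of `r` writes `A ∘ r` as a join `⨆ φ(B) ⊓ b` of basic opens, and `r ∘ η = id`
turns this into `A = ⨆ B ⊓ b` on `X`. Since an open filter is monotone and satisfies
`u(B) ⊓ b ≤ u(B ⊓ b)`, this gives `A (r u) ≤ u A`, hence `e(x, r u) ≤ lim u (x)`. Conversely
`lim u (x) ⊓ B x ≤ u B`, so `lim u (x) ⊓ A x ≤ ⨆ u(B) ⊓ b = A (r u)`, i.e.
`lim u (x) ≤ e(x, r u)`.
-/

section

variable [Order.Frame L] {𝒪 : Set (X → L)}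

def limF (𝒪 : Set (X → L)) (u : LFilter 𝒪) (x : X) : L :=
  ⨅ A : ↥𝒪, (A : X → L) x ⇨ u.toFun A

lemma LFilter.inf_const_le (h𝒪 : IsLTopology 𝒪) (u : LFilter 𝒪) {A B : ↥𝒪} {b : L}
    (hBA : ∀ y, (B : X → L) y ⊓ b ≤ (A : X → L) y) : u.toFun B ⊓ b ≤ u.toFun A := by
  have hb := h𝒪.const_mem b
  have hBb : (B : X → L) ⊓ (fun _ => b) ∈ 𝒪 := h𝒪.inf_mem _ _ B.2 hb
  calc u.toFun B ⊓ b ≤ u.toFun B ⊓ u.toFun ⟨fun _ => b, hb⟩ :=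
        inf_le_inf_left _ (u.const_le b hb)
    _ = u.toFun ⟨(B : X → L) ⊓ (fun _ => b), hBb⟩ := (u.map_inf B ⟨_, hb⟩ hBb).symm
    _ ≤ u.toFun A := u.mono _ A hBA

lemma limF_inf_le (u : LFilter 𝒪) (x : X) (B : ↥𝒪) :
    limF 𝒪 u x ⊓ (B : X → L) x ≤ u.toFun B :=
  (inf_le_inf_right _ (iInf_le _ B)).trans himp_inf_le

variable {r : LFilter 𝒪 → X}

lemma apply_eq_iSup_of_comp_eq (hunit : ∀ x, r (ptFilter 𝒪 x) = x) {A : X → L}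
    {S : Set (↥𝒪 × L)} (hS : A ∘ r = fun u => ⨆ p ∈ S, u.toFun p.1 ⊓ p.2) (y : X) :
    A y = ⨆ p ∈ S, (p.1 : X → L) y ⊓ p.2 := by
  have h := congrFun hS (ptFilter 𝒪 y)
  rwa [Function.comp_apply, hunit y] at h

lemma apply_le_toFun_of_comp_mem (h𝒪 : IsLTopology 𝒪)
    (hrc : ∀ A : ↥𝒪, ((A : X → L) ∘ r) ∈ filtOpens 𝒪) (hunit : ∀ x, r (ptFilter 𝒪 x) = x)
    (u : LFilter 𝒪) (A : ↥𝒪) : (A : X → L) (r u) ≤ u.toFun A := by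
  obtain ⟨S, hS⟩ := hrc A
  rw [show (A : X → L) (r u) = _ from congrFun hS u]
  refine iSup₂_le fun p hp => u.inf_const_le h𝒪 fun y => ?_
  rw [apply_eq_iSup_of_comp_eq hunit hS y]
  exact le_iSup₂ (f := fun p _ => (p.1 : X → L) y ⊓ p.2) p hp

lemma limF_inf_apply_le (hrc : ∀ A : ↥𝒪, ((A : X → L) ∘ r) ∈ filtOpens 𝒪)
    (hunit : ∀ x, r (ptFilter 𝒪 x) = x) (u : LFilter 𝒪) (x : X) (A : ↥𝒪) :
    limF 𝒪 u x ⊓ (A : X → L) x ≤ (A : X → L) (r u) := by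
  obtain ⟨S, hS⟩ := hrc A
  rw [show (A : X → L) (r u) = _ from congrFun hS u, apply_eq_iSup_of_comp_eq hunit hS x,
    inf_iSup₂_eq]
  refine iSup₂_mono fun p _ => ?_
  rw [← inf_assoc]
  exact inf_le_inf_right _ (limF_inf_le u x p.1)

end

theorem stmt16_general [Order.Frame L] (𝒪 : Set (X → L)) (h𝒪 : IsLTopology 𝒪)
    (r : LFilter 𝒪 → X)
    (hrc : ∀ A : ↥𝒪, ((A : X → L) ∘ r) ∈ filtOpens 𝒪)
    (hunit : ∀ x, r (ptFilter 𝒪 x) = x) :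
    ∀ (u : LFilter 𝒪) (x : X),
      (⨅ A : ↥𝒪, (A : X → L) x ⇨ u.toFun A) = specE 𝒪 x (r u) := by
  intro u x
  change limF 𝒪 u x = specE 𝒪 x (r u)
  refine le_antisymm (le_iInf fun A => le_himp_iff.2 ?_) (iInf_mono fun A => ?_)
  · exact limF_inf_apply_le hrc hunit u x A
  · exact himp_le_himp_left (apply_le_toFun_of_comp_mem h𝒪 hrc hunit u A)

/-- For a `Φ_L`-algebra `(X, r)` over `T0` `L`-valued topological spaces
with specialization `L`-order `e`: `lim_X u (x) = e(x, r(u))`, where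
`lim_X u (x) = ⨅_{A ∈ 𝒪} (A(x) ⇨ u(A))`. -/
theorem stmt16 [Order.Frame L] (𝒪 : Set (X → L)) (h𝒪 : IsLTopology 𝒪)
    (hT0 : ∀ x y : X, (∀ A ∈ 𝒪, A x = A y) → x = y)
    (r : LFilter 𝒪 → X)
    (hrc : ∀ A : ↥𝒪, ((A : X → L) ∘ r) ∈ filtOpens 𝒪)
    (hunit : ∀ x, r (ptFilter 𝒪 x) = x)
    (hmul : ∀ α : LFilter (filtOpens 𝒪),
      r (filtMap (filtOpens 𝒪) 𝒪 r hrc α) = r (muF 𝒪 α)) :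
    ∀ (u : LFilter 𝒪) (x : X),
      (⨅ A : ↥𝒪, (A : X → L) x ⇨ u.toFun A) = specE 𝒪 x (r u) :=
  stmt16_general 𝒪 h𝒪 r hrc hunit
end

section
/- Let (X,𝒪) be an L-valued topological space and order Φ_L(X) by sub(u,v) = ⨅_{A∈𝒪} (u(A) ⇨ v(A)). Then (Φ_L(X), sub) is an L-valued dcpo: for every directed L-subset 𝒜 : Φ_L(X) → L, the map w defined by w(A) = ⨆_{u∈Φ_L(X)} 𝒜(u) ⊓ u(A) is an open filter of X and is the supremum of 𝒜 in (Φ_L(X), sub), i.e. sub(w,v) = ⨅_{u∈Φ_L(X)} (𝒜(u) ⇨ sub(u,v)) for every v ∈ Φ_L(X). -/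
variable {L : Type*} {X : Type*} {Y : Type*}

/-!
Directedness provides, for `u` and `v`, a common upper bound `w` with
`u A ⊓ v B ≤ w A ⊓ w B = w (A ⊓ B)`, so the weighted pointwise supremum `w A = ⨆ u, 𝒜 u ⊓ u A`
preserves binary meets; `⨆ u, 𝒜 u = ⊤` gives `a ≤ w a_X`. That `w` is the supremum is pure
frame algebra: `⇨` turns suprema in its first argument into infima.
-/

theorem iInf_iSup_inf_himp {ι κ : Type*} [Order.Frame L] (a : ι → L) (f : ι → κ → L)
    (g : κ → L) :
    (⨅ k, (⨆ i, a i ⊓ f i k) ⇨ g k) = ⨅ i, a i ⇨ ⨅ k, f i k ⇨ g k := by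
  simp only [iSup_himp_eq, himp_iInf_eq, himp_himp]
  exact iInf_comm

namespace LFilter

variable [Order.Frame L] {𝒪 : Set (X → L)}

theorem subF_inf_le (u w : LFilter 𝒪) (A : ↥𝒪) : subF u w ⊓ u.toFun A ≤ w.toFun A :=
  (inf_le_inf_right _ (iInf_le _ A)).trans himp_inf_le

theorem inf_le_iSup_of_directed {𝒜 : LFilter 𝒪 → L} (h𝒜 : DirectedE subF 𝒜)
    (u v : LFilter 𝒪) (A B : ↥𝒪) (h : (A : X → L) ⊓ (B : X → L) ∈ 𝒪) :
    𝒜 u ⊓ u.toFun A ⊓ (𝒜 v ⊓ v.toFun B) ≤ ⨆ w, 𝒜 w ⊓ w.toFun ⟨_, h⟩ := by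
  calc 𝒜 u ⊓ u.toFun A ⊓ (𝒜 v ⊓ v.toFun B)
      ≤ (⨆ w, 𝒜 w ⊓ subF u w ⊓ subF v w) ⊓ (u.toFun A ⊓ v.toFun B) :=
        le_inf ((inf_le_inf inf_le_left inf_le_left).trans (h𝒜.2 u v))
          (inf_le_inf inf_le_right inf_le_right)
    _ = ⨆ w, 𝒜 w ⊓ (subF u w ⊓ u.toFun A) ⊓ (subF v w ⊓ v.toFun B) := by
        rw [iSup_inf_eq]
        exact iSup_congr fun w => by ac_rfl
    _ ≤ ⨆ w, 𝒜 w ⊓ w.toFun ⟨_, h⟩ := iSup_mono fun w => by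
        rw [w.map_inf A B h, inf_assoc]
        exact inf_le_inf_left _ (inf_le_inf (subF_inf_le u w A) (subF_inf_le v w B))

def dirSup (𝒜 : LFilter 𝒪 → L) (h𝒜 : DirectedE subF 𝒜) : LFilter 𝒪 where
  toFun A := ⨆ u, 𝒜 u ⊓ u.toFun A
  map_inf A B h := by
    refine le_antisymm (le_inf ?_ ?_) ?_
    · exact iSup_mono fun u => inf_le_inf_left _ (u.mono _ A inf_le_left)
    · exact iSup_mono fun u => inf_le_inf_left _ (u.mono _ B inf_le_right)
    · rw [iSup_inf_iSup]
      exact iSup_le fun p => inf_le_iSup_of_directed h𝒜 p.1 p.2 A B h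
  const_le a h := calc
    a = ⨆ u, a ⊓ 𝒜 u := by rw [← inf_iSup_eq, h𝒜.1, inf_top_eq]
    _ ≤ ⨆ u, 𝒜 u ⊓ u.toFun ⟨fun _ => a, h⟩ :=
        iSup_mono fun u => le_inf inf_le_right (inf_le_left.trans (u.const_le a h))

theorem isSupE_dirSup (𝒜 : LFilter 𝒪 → L) (h𝒜 : DirectedE subF 𝒜) :
    IsSupE subF 𝒜 (dirSup 𝒜 h𝒜) := fun v =>
  iInf_iSup_inf_himp 𝒜 (fun u A => u.toFun A) v.toFun

end LFilter

theorem stmt18_general [Order.Frame L] (𝒪 : Set (X → L))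
    (𝒜 : LFilter 𝒪 → L)
    (hdir : (⨆ u, 𝒜 u) = ⊤ ∧
      ∀ u v : LFilter 𝒪, 𝒜 u ⊓ 𝒜 v ≤ ⨆ w, 𝒜 w ⊓ subF u w ⊓ subF v w) :
    (∀ (A B : ↥𝒪) (h : (A : X → L) ⊓ (B : X → L) ∈ 𝒪),
      (⨆ u, 𝒜 u ⊓ u.toFun ⟨(A : X → L) ⊓ (B : X → L), h⟩) =
        (⨆ u, 𝒜 u ⊓ u.toFun A) ⊓ ⨆ u, 𝒜 u ⊓ u.toFun B) ∧
    (∀ (a : L) (h : (fun _ => a : X → L) ∈ 𝒪),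
      a ≤ ⨆ u, 𝒜 u ⊓ u.toFun ⟨fun _ => a, h⟩) ∧
    ∀ v : LFilter 𝒪,
      (⨅ A : ↥𝒪, (⨆ u, 𝒜 u ⊓ u.toFun A) ⇨ v.toFun A) =
        ⨅ u, 𝒜 u ⇨ subF u v :=
  let w := LFilter.dirSup 𝒜 hdir
  ⟨w.map_inf, w.const_le, LFilter.isSupE_dirSup 𝒜 hdir⟩

/-- `(Φ_L(X), sub)` is an `L`-valued dcpo: for every directed `L`-subset
`𝒜` of `Φ_L(X)`, the map `w : A ↦ ⨆_u 𝒜(u) ⊓ u(A)` is an open filter of `X` and is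
the supremum of `𝒜` in `(Φ_L(X), sub)`. -/
theorem stmt18 [Order.Frame L] (𝒪 : Set (X → L)) (h𝒪 : IsLTopology 𝒪)
    (𝒜 : LFilter 𝒪 → L)
    (hdir : (⨆ u, 𝒜 u) = ⊤ ∧
      ∀ u v : LFilter 𝒪, 𝒜 u ⊓ 𝒜 v ≤ ⨆ w, 𝒜 w ⊓ subF u w ⊓ subF v w) :
    (∀ (A B : ↥𝒪) (h : (A : X → L) ⊓ (B : X → L) ∈ 𝒪),
      (⨆ u, 𝒜 u ⊓ u.toFun ⟨(A : X → L) ⊓ (B : X → L), h⟩) =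
        (⨆ u, 𝒜 u ⊓ u.toFun A) ⊓ ⨆ u, 𝒜 u ⊓ u.toFun B) ∧
    (∀ (a : L) (h : (fun _ => a : X → L) ∈ 𝒪),
      a ≤ ⨆ u, 𝒜 u ⊓ u.toFun ⟨fun _ => a, h⟩) ∧
    ∀ v : LFilter 𝒪,
      (⨅ A : ↥𝒪, (⨆ u, 𝒜 u ⊓ u.toFun A) ⇨ v.toFun A) =
        ⨅ u, 𝒜 u ⇨ subF u v :=
  stmt18_general 𝒪 𝒜 hdir
end

section
/- Let (X,r) be a Φ_L-algebra over the category of T0 L-valued topological spaces, with specialization L-order e on X. Then r : (Φ_L(X), sub) → (X, e) preserves suprema of directed L-subsets: for every directed L-subset 𝒜 : Φ_L(X) → L, r(⊔𝒜) is a supremum in (X,e) of the L-subset r→(𝒜), where r→(𝒜)(x) = ⨆_{u : r(u)=x} 𝒜(u) and ⊔𝒜 is the open filter A ↦ ⨆_u 𝒜(u) ⊓ u(A). -/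
variable {L : Type*} {X : Type*} {Y : Type*}

/-!
Each open of `Φ_L(X)` is a join of `φ(A) ⊓ a`, and these are "linear" in the filter, so
evaluating an open at `⊔𝒜` gives `⨆ u, 𝒜 u ⊓ W u`. Since `A ∘ r` is open for every open `A`,
this yields `A (r (⊔𝒜)) = ⨆ u, 𝒜 u ⊓ A (r u)`, and in the specialization order an identity
`A s = ⨆ z, S z ⊓ A z` for all opens `A` already makes `s` a supremum of `S`, by Heyting
currying `(a ⊓ b ⇨ c) = (a ⇨ b ⇨ c)`.
-/

lemma iSup_fiber_inf_eq {ι α : Type*} [Order.Frame L] (f : ι → α) (a : ι → L) (g : α → L) :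
    ⨆ z, (⨆ i, ⨆ _ : f i = z, a i) ⊓ g z = ⨆ i, a i ⊓ g (f i) := by
  simp only [iSup_inf_eq]
  rw [iSup_comm]
  exact iSup_congr fun i => iSup_iSup_eq_right

lemma isSupE_specE_of_forall_apply_eq [Order.Frame L] {𝒪 : Set (X → L)} {S : X → L} {s : X}
    (h : ∀ A : ↥𝒪, (A : X → L) s = ⨆ z, S z ⊓ (A : X → L) z) :
    IsSupE (specE 𝒪) S s := by
  intro y
  calc specE 𝒪 s y = ⨅ A : ↥𝒪, ⨅ z, S z ⊓ (A : X → L) z ⇨ (A : X → L) y := by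
        simp only [specE, h, iSup_himp_eq]
    _ = ⨅ z, ⨅ A : ↥𝒪, S z ⇨ ((A : X → L) z ⇨ (A : X → L) y) := by
        rw [iInf_comm]; simp only [himp_himp]
    _ = ⨅ z, S z ⇨ specE 𝒪 z y := by simp only [specE, himp_iInf_eq]

lemma apply_eq_iSup_inf_of_mem_filtOpens [Order.Frame L] {𝒪 : Set (X → L)}
    {W : LFilter 𝒪 → L} (hW : W ∈ filtOpens 𝒪) {𝒜 : LFilter 𝒪 → L} {w : LFilter 𝒪}
    (hw : ∀ A : ↥𝒪, w.toFun A = ⨆ u, 𝒜 u ⊓ u.toFun A) :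
    W w = ⨆ u, 𝒜 u ⊓ W u := by
  obtain ⟨S, rfl⟩ := hW
  simp only [hw, iSup_inf_eq, inf_iSup_eq, inf_assoc]
  rw [iSup_comm]
  exact iSup_congr fun p => iSup_comm

theorem stmt19_general [Order.Frame L] (𝒪 : Set (X → L))
    (r : LFilter 𝒪 → X)
    (hrc : ∀ A : ↥𝒪, ((A : X → L) ∘ r) ∈ filtOpens 𝒪)
    (𝒜 : LFilter 𝒪 → L)
    (w : LFilter 𝒪) (hw : ∀ A : ↥𝒪, w.toFun A = ⨆ u, 𝒜 u ⊓ u.toFun A) :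
    IsSupE (specE 𝒪) (fun x => ⨆ u : LFilter 𝒪, ⨆ _ : r u = x, 𝒜 u) (r w) := by
  refine isSupE_specE_of_forall_apply_eq fun A => ?_
  rw [iSup_fiber_inf_eq]
  exact apply_eq_iSup_inf_of_mem_filtOpens (hrc A) hw

/-- For a `Φ_L`-algebra `(X, r)` with specialization `L`-order `e`, the
map `r` preserves suprema of directed `L`-subsets: for every directed `𝒜` with
supremum filter `w : A ↦ ⨆_u 𝒜(u) ⊓ u(A)`, the point `r(w)` is a supremum in
`(X, e)` of `r→(𝒜) : x ↦ ⨆_{u, r(u) = x} 𝒜(u)`. -/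
theorem stmt19 [Order.Frame L] (𝒪 : Set (X → L)) (h𝒪 : IsLTopology 𝒪)
    (hT0 : ∀ x y : X, (∀ A ∈ 𝒪, A x = A y) → x = y)
    (r : LFilter 𝒪 → X)
    (hrc : ∀ A : ↥𝒪, ((A : X → L) ∘ r) ∈ filtOpens 𝒪)
    (hunit : ∀ x, r (ptFilter 𝒪 x) = x)
    (hmul : ∀ α : LFilter (filtOpens 𝒪),
      r (filtMap (filtOpens 𝒪) 𝒪 r hrc α) = r (muF 𝒪 α))
    (𝒜 : LFilter 𝒪 → L)
    (hdir : (⨆ u, 𝒜 u) = ⊤ ∧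
      ∀ u v : LFilter 𝒪, 𝒜 u ⊓ 𝒜 v ≤ ⨆ w, 𝒜 w ⊓ subF u w ⊓ subF v w)
    (w : LFilter 𝒪) (hw : ∀ A : ↥𝒪, w.toFun A = ⨆ u, 𝒜 u ⊓ u.toFun A) :
    IsSupE (specE 𝒪) (fun x => ⨆ u : LFilter 𝒪, ⨆ _ : r u = x, 𝒜 u) (r w) :=
  stmt19_general 𝒪 r hrc 𝒜 w hw
end
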